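/- arXiv:2111.06122 — 2 statements merged into one kernel-verified Lean document; each statement's English description precedes it below -/
import Mathlib

section
/- Let h be a positive integer and t a real number with t ≥ h + 1. Then for every B > 1 and every ε > 0, ∑_{1 ≤ x₁ ≤ B} ⋯ ∑_{1 ≤ x_h ≤ B} φ(x₁)⋯φ(x_h) / lcm(x₁,…,x_h)^t ≪_{h,ε} B^ε. -/
theorem totient_div_lcm_pow_sum_le_of_large_exponent
    (h : ℕ) (hh : 0 < h) (t : ℝ) (ht : (h : ℝ) + 1 ≤ t) (ε : ℝ) (hε : 0 < ε) :
    ∃ C : ℝ, 0 < C ∧ ∀ B : ℕ, 1 < B →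
      ∑ x ∈ Fintype.piFinset (fun _ : Fin h => Finset.Icc 1 B),
          (∏ i, (Nat.totient (x i) : ℝ)) / ((Finset.univ.lcm x : ℕ) : ℝ) ^ t
        ≤ C * (B : ℝ) ^ ε := by
  refine ⟨1 + h / ε, by positivity, fun B hB => ?_⟩
  set S := Fintype.piFinset (fun _ : Fin h => Finset.Icc 1 B) with hS
  have hBpos : (0 : ℕ) < B := by omega
  -- every tuple has lcm in Icc 1 (B^h)
  have hmaps : ∀ x ∈ S, (Finset.univ.lcm x : ℕ) ∈ Finset.Icc 1 (B ^ h) := by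
    intro x hx
    simp only [hS, Fintype.mem_piFinset, Finset.mem_Icc] at hx
    have hdvd : (Finset.univ.lcm x : ℕ) ∣ ∏ i, x i :=
      Finset.lcm_dvd fun i _ => Finset.dvd_prod_of_mem x (Finset.mem_univ i)
    have hprodpos : 0 < ∏ i, x i := Finset.prod_pos fun i _ => (hx i).1
    have hle : (Finset.univ.lcm x : ℕ) ≤ ∏ i, x i := Nat.le_of_dvd hprodpos hdvd
    have hprodle : ∏ i, x i ≤ B ^ h := by
      calc ∏ i, x i ≤ ∏ _i : Fin h, B := Finset.prod_le_prod (fun i _ => Nat.zero_le _)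
            (fun i _ => (hx i).2)
        _ = B ^ h := by simp
    refine Finset.mem_Icc.mpr ⟨?_, hle.trans hprodle⟩
    exact Nat.pos_of_dvd_of_pos hdvd hprodpos
  have key : ∑ x ∈ S, (∏ i, (Nat.totient (x i) : ℝ)) / ((Finset.univ.lcm x : ℕ) : ℝ) ^ t
      ≤ ∑ n ∈ Finset.Icc 1 (B ^ h), (n : ℝ)⁻¹ := by
    rw [← Finset.sum_fiberwise_of_maps_to hmaps]
    refine Finset.sum_le_sum fun n hn => ?_
    obtain ⟨hn1, hnB⟩ := Finset.mem_Icc.mp hn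
    have hn0 : (0:ℝ) < n := by exact_mod_cast hn1
    -- inner sum over tuples with lcm = n
    have hsub : S.filter (fun x => (Finset.univ.lcm x : ℕ) = n)
        ⊆ Fintype.piFinset (fun _ : Fin h => n.divisors) := by
      intro x hx
      simp only [Finset.mem_filter, hS, Fintype.mem_piFinset, Finset.mem_Icc] at hx
      obtain ⟨hx1, hx2⟩ := hx
      simp only [Fintype.mem_piFinset, Nat.mem_divisors]
      intro i
      refine ⟨hx2 ▸ Finset.dvd_lcm (Finset.mem_univ i), by omega⟩
    calc ∑ x ∈ S.filter (fun x => (Finset.univ.lcm x : ℕ) = n),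
            (∏ i, (Nat.totient (x i) : ℝ)) / ((Finset.univ.lcm x : ℕ) : ℝ) ^ t
        = ∑ x ∈ S.filter (fun x => (Finset.univ.lcm x : ℕ) = n),
            (∏ i, (Nat.totient (x i) : ℝ)) / (n : ℝ) ^ t := by
          refine Finset.sum_congr rfl fun x hx => ?_
          rw [(Finset.mem_filter.mp hx).2]
      _ ≤ ∑ x ∈ Fintype.piFinset (fun _ : Fin h => n.divisors),
            (∏ i, (Nat.totient (x i) : ℝ)) / (n : ℝ) ^ t := by
          refine Finset.sum_le_sum_of_subset_of_nonneg hsub fun x _ _ => ?_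
          positivity
      _ = (∑ x ∈ Fintype.piFinset (fun _ : Fin h => n.divisors),
            ∏ i, (Nat.totient (x i) : ℝ)) / (n : ℝ) ^ t := by
          rw [Finset.sum_div]
      _ = ((n : ℝ) ^ h) / (n : ℝ) ^ t := by
          congr 1
          have hps := Finset.prod_univ_sum (fun _ : Fin h => n.divisors)
            (fun _ d => (Nat.totient d : ℝ))
          rw [← hps]
          have hd : ∑ d ∈ n.divisors, (Nat.totient d : ℝ) = (n : ℝ) := by
            rw [← Nat.cast_sum]
            exact_mod_cast congrArg (Nat.cast (R := ℝ)) (Nat.sum_totient n)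
          simp [hd]
      _ ≤ (n : ℝ)⁻¹ := by
          rw [div_le_iff₀ (by positivity)]
          have h1n : (1:ℝ) ≤ n := by exact_mod_cast hn1
          have : (n : ℝ) ^ ((h : ℝ) + 1) ≤ (n : ℝ) ^ t :=
            Real.rpow_le_rpow_of_exponent_le h1n ht
          have heq : (n : ℝ) ^ ((h : ℝ) + 1) = (n : ℝ) ^ h * (n : ℝ) := by
            rw [show ((h : ℝ) + 1) = ((h + 1 : ℕ) : ℝ) by push_cast; ring,
              Real.rpow_natCast, pow_succ]
          rw [inv_mul_eq_div, le_div_iff₀ hn0]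
          calc (n : ℝ) ^ h * (n : ℝ) = (n : ℝ) ^ ((h : ℝ) + 1) := heq.symm
            _ ≤ (n : ℝ) ^ t := this
  -- harmonic bound
  have hharm : ∑ n ∈ Finset.Icc 1 (B ^ h), (n : ℝ)⁻¹ ≤ 1 + Real.log (B ^ h) := by
    have h1 := harmonic_le_one_add_log (B ^ h)
    rw [harmonic_eq_sum_Icc] at h1
    push_cast at h1
    exact_mod_cast h1
  have h1B : (1:ℝ) ≤ (B:ℝ) := by exact_mod_cast hB.le
  have hrpow1 : (1:ℝ) ≤ (B:ℝ) ^ ε := by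
    calc (1:ℝ) = (1:ℝ) ^ ε := (Real.one_rpow ε).symm
      _ ≤ (B:ℝ) ^ ε := Real.rpow_le_rpow zero_le_one h1B hε.le
  have hlogle : Real.log (B:ℝ) ≤ (B:ℝ) ^ ε / ε :=
    Real.log_le_rpow_div (by positivity) hε
  calc ∑ x ∈ S, (∏ i, (Nat.totient (x i) : ℝ)) / ((Finset.univ.lcm x : ℕ) : ℝ) ^ t
      ≤ ∑ n ∈ Finset.Icc 1 (B ^ h), (n : ℝ)⁻¹ := key
    _ ≤ 1 + Real.log (B ^ h) := hharm
    _ = 1 + h * Real.log B := by rw [Real.log_pow]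
    _ ≤ (B:ℝ) ^ ε + h * ((B:ℝ) ^ ε / ε) := by gcongr
    _ = (1 + h / ε) * (B:ℝ) ^ ε := by field_simp
end

section
/- Let h be a positive integer and t a real number with 1 < t < h + 1. Then for every B > 1 and every ε > 0, ∑_{1 ≤ x₁ ≤ B} ⋯ ∑_{1 ≤ x_h ≤ B} φ(x₁)⋯φ(x_h) / lcm(x₁,…,x_h)^t ≪_{h,ε} B^{h − t + 1 + ε}. -/
lemma sq_div_four_le_exp {y : ℝ} (hy : 0 ≤ y) : y ^ 2 / 4 ≤ Real.exp y := by
  have h := Real.add_one_le_exp (y / 2)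
  have h2 : (y / 2 + 1) ^ 2 ≤ Real.exp (y / 2) ^ 2 :=
    pow_le_pow_left₀ (by linarith) h 2
  have h3 : Real.exp (y / 2) ^ 2 = Real.exp y := by
    rw [sq, ← Real.exp_add, add_halves]
  nlinarith

lemma aux_prime_bound (ε : ℝ) (hε : 0 < ε) (p a : ℕ) (hp : 2 ≤ p) (ha : 1 ≤ a) :
    ((a : ℝ) + 1) ≤ (if p ≤ ⌈(2:ℝ) ^ (1/ε)⌉₊ then max 1 (8 / (ε * Real.log 2) ^ 2) else 1)
      * ((p : ℝ) ^ a) ^ ε := by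
  have hlog2 : 0 < Real.log 2 := Real.log_pos one_lt_two
  have hp0 : (0:ℝ) < (p:ℝ) := by positivity
  have hpε : ((p : ℝ) ^ a) ^ ε = ((p : ℝ) ^ ε) ^ a := by
    rw [← Real.rpow_natCast (p:ℝ) a, ← Real.rpow_mul hp0.le, mul_comm,
      Real.rpow_mul hp0.le, Real.rpow_natCast]
  rw [hpε]
  split_ifs with hcase
  · set K := max 1 (8 / (ε * Real.log 2) ^ 2) with hK
    have hK8 : 8 / (ε * Real.log 2) ^ 2 ≤ K := le_max_right _ _
    have hK1 : (1:ℝ) ≤ K := le_max_left _ _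
    have h2ε : (2:ℝ) ^ ε ≤ (p : ℝ) ^ ε :=
      Real.rpow_le_rpow (by norm_num) (by exact_mod_cast hp) hε.le
    have hpow : ((2:ℝ) ^ ε) ^ a ≤ ((p : ℝ) ^ ε) ^ a :=
      pow_le_pow_left₀ (by positivity) h2ε a
    have h2exp : ((2:ℝ) ^ ε) ^ a = Real.exp ((a : ℝ) * (Real.log 2 * ε)) := by
      rw [Real.rpow_def_of_pos (by norm_num : (0:ℝ) < 2), ← Real.exp_nat_mul]
    set y := (a : ℝ) * (Real.log 2 * ε) with hy
    have hy0 : 0 ≤ y := by positivity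
    have hexp := sq_div_four_le_exp hy0
    have ha' : (1:ℝ) ≤ (a:ℝ) := by exact_mod_cast ha
    have hstep : 8 / (ε * Real.log 2) ^ 2 * (y ^ 2 / 4) ≤ K * Real.exp y :=
      mul_le_mul hK8 hexp (by positivity) (by linarith)
    have heq : 8 / (ε * Real.log 2) ^ 2 * (y ^ 2 / 4) = 2 * (a : ℝ) ^ 2 := by
      rw [hy]
      field_simp
      ring
    have h3 : (a : ℝ) + 1 ≤ 2 * (a : ℝ) ^ 2 := by nlinarith
    calc (a : ℝ) + 1 ≤ 2 * (a:ℝ)^2 := h3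
      _ ≤ K * Real.exp y := by rw [← heq]; exact hstep
      _ = K * ((2:ℝ) ^ ε) ^ a := by rw [h2exp]
      _ ≤ K * ((p : ℝ) ^ ε) ^ a := by
          exact mul_le_mul_of_nonneg_left hpow (by linarith)
  · have hPp : ((2:ℝ) ^ (1/ε)) ≤ (p : ℝ) := by
      refine le_trans (Nat.le_ceil _) ?_
      exact_mod_cast (Nat.lt_of_not_le hcase).le
    have h2p : (2:ℝ) ≤ (p : ℝ) ^ ε := by
      calc (2:ℝ) = ((2:ℝ) ^ (1/ε)) ^ ε := by
            rw [← Real.rpow_mul (by norm_num), one_div_mul_cancel hε.ne', Real.rpow_one]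
        _ ≤ (p : ℝ) ^ ε := Real.rpow_le_rpow (by positivity) hPp hε.le
    have h1 : (a : ℝ) + 1 ≤ (2:ℝ) ^ a := by
      exact_mod_cast Nat.succ_le_of_lt (Nat.lt_two_pow_self (n := a))
    calc (a : ℝ) + 1 ≤ (2:ℝ) ^ a := h1
      _ ≤ ((p : ℝ) ^ ε) ^ a := pow_le_pow_left₀ (by norm_num) h2p a
      _ = 1 * ((p : ℝ) ^ ε) ^ a := (one_mul _).symm


lemma divisor_bound (ε : ℝ) (hε : 0 < ε) :
    ∃ C : ℝ, 1 ≤ C ∧ ∀ n : ℕ, n ≠ 0 → ((n.divisors.card : ℝ)) ≤ C * (n : ℝ) ^ ε := by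
  set P := ⌈(2:ℝ) ^ (1/ε)⌉₊ with hP
  set K := max 1 (8 / (ε * Real.log 2) ^ 2) with hKdef
  have hK1 : (1:ℝ) ≤ K := le_max_left _ _
  refine ⟨K ^ (P + 1), one_le_pow₀ hK1, ?_⟩
  intro n hn
  have h1 : ((n.divisors.card : ℝ)) = ∏ p ∈ n.primeFactors, ((n.factorization p : ℝ) + 1) := by
    rw [Nat.card_divisors hn]
    push_cast
    rfl
  have h2 : (n : ℝ) = ∏ p ∈ n.primeFactors, (p : ℝ) ^ (n.factorization p) := by
    conv_lhs => rw [← Nat.factorization_prod_pow_eq_self hn]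
    rw [Nat.prod_factorization_eq_prod_primeFactors]
    push_cast
    rfl
  have h3 : (n : ℝ) ^ ε = ∏ p ∈ n.primeFactors, ((p : ℝ) ^ (n.factorization p)) ^ ε := by
    rw [h2]
    exact (Real.finset_prod_rpow _ _ (fun i _ => by positivity) ε).symm
  have hmain : ((n.divisors.card : ℝ)) ≤
      (∏ p ∈ n.primeFactors, (if p ≤ P then K else 1)) * (n : ℝ) ^ ε := by
    rw [h1, h3, ← Finset.prod_mul_distrib]
    refine Finset.prod_le_prod (fun p _ => by positivity) (fun p hpmem => ?_)
    have hp : p.Prime := Nat.prime_of_mem_primeFactors hpmem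
    have ha : 1 ≤ n.factorization p :=
      (Nat.Prime.factorization_pos_of_dvd hp hn (Nat.dvd_of_mem_primeFactors hpmem))
    exact aux_prime_bound ε hε p _ hp.two_le ha
  refine hmain.trans (mul_le_mul_of_nonneg_right ?_ (by positivity))
  calc ∏ p ∈ n.primeFactors, (if p ≤ P then K else 1)
      = ∏ p ∈ n.primeFactors.filter (· ≤ P), K := (Finset.prod_filter _ _).symm
    _ = K ^ (n.primeFactors.filter (· ≤ P)).card := by rw [Finset.prod_const]
    _ ≤ K ^ (P + 1) := by
        refine pow_le_pow_right₀ hK1 ?_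
        have hsub : n.primeFactors.filter (· ≤ P) ⊆ Finset.range (P + 1) := by
          intro x hx
          simp only [Finset.mem_filter] at hx
          exact Finset.mem_range.mpr (Nat.lt_succ_of_le hx.2)
        simpa using Finset.card_le_card hsub

lemma sum_inv_le_one_add_log (N : ℕ) :
    ∑ i ∈ Finset.Icc 1 N, ((i : ℝ))⁻¹ ≤ 1 + Real.log N := by
  have h := harmonic_le_one_add_log N
  have h2 : (harmonic N : ℝ) = ∑ i ∈ Finset.Icc 1 N, ((i : ℝ))⁻¹ := by
    rw [harmonic_eq_sum_Icc]
    push_cast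
    rfl
  linarith


theorem totient_div_lcm_pow_sum_le_of_small_exponent
    (h : ℕ) (hh : 0 < h) (t : ℝ) (ht1 : 1 < t) (ht2 : t < (h : ℝ) + 1) (ε : ℝ) (hε : 0 < ε) :
    ∃ C : ℝ, 0 < C ∧ ∀ B : ℕ, 1 < B →
      ∑ x ∈ Fintype.piFinset (fun _ : Fin h => Finset.Icc 1 B),
          (∏ i, (Nat.totient (x i) : ℝ)) / ((Finset.univ.lcm x : ℕ) : ℝ) ^ t
        ≤ C * (B : ℝ) ^ ((h : ℝ) - t + 1 + ε) := by
  have hη0 : 0 < min ε (t - 1) := lt_min hε (by linarith)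
  set η := min ε (t - 1) / 2 with hηdef
  have hη : 0 < η := by positivity
  have hη2 : 2 * η ≤ ε := by
    have := min_le_left ε (t - 1)
    rw [hηdef]; linarith
  have hηt : η - t + 1 < 0 := by
    have h1 := min_le_right ε (t - 1)
    have : η ≤ (t - 1) / 2 := by rw [hηdef]; linarith
    linarith
  have hh1 : (1 : ℝ) ≤ (h : ℝ) := by exact_mod_cast hh
  have hu0 : 0 ≤ (h : ℝ) + η - t + 1 := by linarith
  obtain ⟨C₁, hC₁, hdiv⟩ := divisor_bound (η / h) (by positivity)
  refine ⟨C₁ ^ h * (1 + (h : ℝ) / η), by positivity, ?_⟩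
  intro B hB
  set u : ℝ := (h : ℝ) + η - t + 1 with hu
  have hB1 : (1 : ℝ) ≤ (B : ℝ) := by exact_mod_cast hB.le
  have hB0 : (0 : ℝ) < (B : ℝ) := by linarith
  set L := B ^ h with hL
  set Pfin := Fintype.piFinset (fun _ : Fin h => Finset.Icc 1 B) with hPfin
  have hmem : ∀ x ∈ Pfin, ∀ i, 1 ≤ x i ∧ x i ≤ B := by
    intro x hx i
    exact Finset.mem_Icc.mp (Fintype.mem_piFinset.mp hx i)
  have hmaps : ∀ x ∈ Pfin, Finset.univ.lcm x ∈ Finset.Icc 1 L := by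
    intro x hx
    have hxi := hmem x hx
    have hlcm0 : Finset.univ.lcm x ≠ 0 := by
      rw [Ne, Finset.lcm_eq_zero_iff]
      rintro ⟨i, -, hi⟩
      have := (hxi i).1
      omega
    have hdvd : Finset.univ.lcm x ∣ ∏ i, x i :=
      Finset.lcm_dvd (fun i _ => Finset.dvd_prod_of_mem x (Finset.mem_univ i))
    have hprodpos : 0 < ∏ i, x i := Finset.prod_pos (fun i _ => (hxi i).1)
    have hle : Finset.univ.lcm x ≤ ∏ i, x i := Nat.le_of_dvd hprodpos hdvd
    have hprodle : ∏ i, x i ≤ L := by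
      calc ∏ i, x i ≤ ∏ _i : Fin h, B := Finset.prod_le_prod' (fun i _ => (hxi i).2)
        _ = B ^ h := by simp
    exact Finset.mem_Icc.mpr ⟨Nat.one_le_iff_ne_zero.mpr hlcm0, hle.trans hprodle⟩
  rw [← Finset.sum_fiberwise_of_maps_to hmaps]
  have hinner : ∀ ℓ ∈ Finset.Icc 1 L,
      (∑ x ∈ Pfin.filter (fun x => Finset.univ.lcm x = ℓ),
        (∏ i, (Nat.totient (x i) : ℝ)) / ((Finset.univ.lcm x : ℕ) : ℝ) ^ t)
      ≤ C₁ ^ h * ((B : ℝ) ^ u * ((ℓ : ℝ))⁻¹) := by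
    intro ℓ hℓ
    obtain ⟨hℓ1, hℓL⟩ := Finset.mem_Icc.mp hℓ
    have hℓ0 : (0 : ℝ) < (ℓ : ℝ) := by exact_mod_cast hℓ1
    set M := min ℓ B with hM
    have hterm : ∀ x ∈ Pfin.filter (fun x => Finset.univ.lcm x = ℓ),
        (∏ i, (Nat.totient (x i) : ℝ)) / ((Finset.univ.lcm x : ℕ) : ℝ) ^ t
          ≤ (M : ℝ) ^ h / (ℓ : ℝ) ^ t := by
      intro x hx
      obtain ⟨hxP, hxl⟩ := Finset.mem_filter.mp hx
      rw [hxl]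
      have hprod : (∏ i, (Nat.totient (x i) : ℝ)) ≤ (M : ℝ) ^ h := by
        calc ∏ i, (Nat.totient (x i) : ℝ) ≤ ∏ _i : Fin h, (M : ℝ) := by
              refine Finset.prod_le_prod (fun i _ => by positivity) (fun i _ => ?_)
              have h1 : Nat.totient (x i) ≤ x i := Nat.totient_le _
              have h2 : x i ≤ B := (hmem x hxP i).2
              have h3 : x i ∣ ℓ := hxl ▸ Finset.dvd_lcm (Finset.mem_univ i)
              have h4 : x i ≤ ℓ := Nat.le_of_dvd hℓ1 h3
              exact_mod_cast le_min (h1.trans h4) (h1.trans h2)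
          _ = (M : ℝ) ^ h := by simp
      have hpos : (0 : ℝ) < (ℓ : ℝ) ^ t := Real.rpow_pos_of_pos hℓ0 t
      gcongr
    have hcard : ((Pfin.filter (fun x => Finset.univ.lcm x = ℓ)).card : ℝ)
        ≤ ((ℓ.divisors.card : ℝ)) ^ h := by
      have hsub : Pfin.filter (fun x => Finset.univ.lcm x = ℓ) ⊆
          Fintype.piFinset (fun _ : Fin h => ℓ.divisors) := by
        intro x hx
        obtain ⟨hxP, hxl⟩ := Finset.mem_filter.mp hx
        refine Fintype.mem_piFinset.mpr (fun i => ?_)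
        exact Nat.mem_divisors.mpr ⟨hxl ▸ Finset.dvd_lcm (Finset.mem_univ i), by omega⟩
      have := Finset.card_le_card hsub
      have hc2 : (Fintype.piFinset (fun _ : Fin h => ℓ.divisors)).card
          = ℓ.divisors.card ^ h := by
        rw [Fintype.card_piFinset]
        simp
      have : (Pfin.filter (fun x => Finset.univ.lcm x = ℓ)).card ≤ ℓ.divisors.card ^ h :=
        hc2 ▸ this
      exact_mod_cast this
    have hsum := Finset.sum_le_card_nsmul _ _ _ hterm
    rw [nsmul_eq_mul] at hsum
    refine hsum.trans ?_
    have hd : ((Pfin.filter (fun x => Finset.univ.lcm x = ℓ)).card : ℝ)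
        ≤ C₁ ^ h * (ℓ : ℝ) ^ η := by
      calc ((Pfin.filter (fun x => Finset.univ.lcm x = ℓ)).card : ℝ)
          ≤ ((ℓ.divisors.card : ℝ)) ^ h := hcard
        _ ≤ (C₁ * (ℓ : ℝ) ^ (η / h)) ^ h :=
            pow_le_pow_left₀ (by positivity) (hdiv ℓ (by omega)) h
        _ = C₁ ^ h * ((ℓ : ℝ) ^ (η / h)) ^ h := mul_pow _ _ _
        _ = C₁ ^ h * (ℓ : ℝ) ^ η := by
            rw [← Real.rpow_natCast ((ℓ : ℝ) ^ (η / h)) h, ← Real.rpow_mul hℓ0.le,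
              div_mul_cancel₀]
            exact_mod_cast hh.ne'
    have hkey : (ℓ : ℝ) ^ η * ((M : ℝ) ^ h / (ℓ : ℝ) ^ t) ≤ (B : ℝ) ^ u * ((ℓ : ℝ))⁻¹ := by
      rcases le_total ℓ B with hc | hc
      · have hMeq : M = ℓ := min_eq_left hc
        rw [hMeq]
        have e1 : (ℓ : ℝ) ^ η * ((ℓ : ℝ) ^ h / (ℓ : ℝ) ^ t) = (ℓ : ℝ) ^ u * ((ℓ : ℝ))⁻¹ := by
          rw [div_eq_mul_inv, ← Real.rpow_natCast (ℓ : ℝ) h, ← Real.rpow_neg hℓ0.le,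
            ← Real.rpow_add hℓ0, ← Real.rpow_add hℓ0, ← Real.rpow_neg_one (ℓ : ℝ),
            ← Real.rpow_add hℓ0]
          congr 1
          rw [hu]; ring
        rw [e1]
        have hℓB : (ℓ : ℝ) ^ u ≤ (B : ℝ) ^ u :=
          Real.rpow_le_rpow hℓ0.le (by exact_mod_cast hc) hu0
        exact mul_le_mul_of_nonneg_right hℓB (by positivity)
      · have hMeq : M = B := min_eq_right hc
        rw [hMeq]
        have e1 : (ℓ : ℝ) ^ η * ((B : ℝ) ^ h / (ℓ : ℝ) ^ t)
            = (B : ℝ) ^ (h : ℝ) * ((ℓ : ℝ) ^ (η - t + 1) * ((ℓ : ℝ))⁻¹) := by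
          rw [div_eq_mul_inv, ← Real.rpow_natCast (B : ℝ) h, ← Real.rpow_neg hℓ0.le,
            mul_left_comm]
          congr 1
          rw [← Real.rpow_neg_one (ℓ : ℝ), ← Real.rpow_add hℓ0, ← Real.rpow_add hℓ0]
          congr 1
          ring
        have e2 : (B : ℝ) ^ u = (B : ℝ) ^ (h : ℝ) * (B : ℝ) ^ (η - t + 1) := by
          rw [← Real.rpow_add hB0]
          congr 1
          rw [hu]; ring
        rw [e1, e2, mul_assoc]
        refine mul_le_mul_of_nonneg_left ?_ (by positivity)
        refine mul_le_mul_of_nonneg_right ?_ (by positivity)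
        exact Real.rpow_le_rpow_of_nonpos hB0 (by exact_mod_cast hc) hηt.le
    calc ((Pfin.filter (fun x => Finset.univ.lcm x = ℓ)).card : ℝ)
          * ((M : ℝ) ^ h / (ℓ : ℝ) ^ t)
        ≤ (C₁ ^ h * (ℓ : ℝ) ^ η) * ((M : ℝ) ^ h / (ℓ : ℝ) ^ t) :=
          mul_le_mul_of_nonneg_right hd (by positivity)
      _ = C₁ ^ h * ((ℓ : ℝ) ^ η * ((M : ℝ) ^ h / (ℓ : ℝ) ^ t)) := by ring
      _ ≤ C₁ ^ h * ((B : ℝ) ^ u * ((ℓ : ℝ))⁻¹) :=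
          mul_le_mul_of_nonneg_left hkey (by positivity)
  refine (Finset.sum_le_sum hinner).trans ?_
  have hfact : ∑ ℓ ∈ Finset.Icc 1 L, C₁ ^ h * ((B : ℝ) ^ u * ((ℓ : ℝ))⁻¹)
      = (C₁ ^ h * (B : ℝ) ^ u) * ∑ ℓ ∈ Finset.Icc 1 L, ((ℓ : ℝ))⁻¹ := by
    rw [Finset.mul_sum]
    exact Finset.sum_congr rfl (fun _ _ => by ring)
  rw [hfact]
  have hharm := sum_inv_le_one_add_log L
  have hlogL : Real.log (L : ℝ) = (h : ℝ) * Real.log B := by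
    rw [hL]
    push_cast
    exact Real.log_pow (n := h) (x := (B:ℝ))
  have hlogB : Real.log B ≤ (B : ℝ) ^ η / η := Real.log_le_rpow_div (by positivity) hη
  have hBη : (1 : ℝ) ≤ (B : ℝ) ^ η := Real.one_le_rpow hB1 hη.le
  have hsum2 : ∑ ℓ ∈ Finset.Icc 1 L, ((ℓ : ℝ))⁻¹ ≤ (1 + (h : ℝ) / η) * (B : ℝ) ^ η := by
    have h5 : (h : ℝ) * Real.log B ≤ (h : ℝ) * ((B : ℝ) ^ η / η) :=
      mul_le_mul_of_nonneg_left hlogB (by positivity)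
    have h6 : (h : ℝ) * ((B : ℝ) ^ η / η) = ((h : ℝ) / η) * (B : ℝ) ^ η := by ring
    calc ∑ ℓ ∈ Finset.Icc 1 L, ((ℓ : ℝ))⁻¹ ≤ 1 + Real.log L := hharm
      _ = 1 + (h : ℝ) * Real.log B := by rw [hlogL]
      _ ≤ (B : ℝ) ^ η + ((h : ℝ) / η) * (B : ℝ) ^ η := by rw [← h6]; linarith
      _ = (1 + (h : ℝ) / η) * (B : ℝ) ^ η := by ring
  calc (C₁ ^ h * (B : ℝ) ^ u) * ∑ ℓ ∈ Finset.Icc 1 L, ((ℓ : ℝ))⁻¹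
      ≤ (C₁ ^ h * (B : ℝ) ^ u) * ((1 + (h : ℝ) / η) * (B : ℝ) ^ η) :=
        mul_le_mul_of_nonneg_left hsum2 (by positivity)
    _ = (C₁ ^ h * (1 + (h : ℝ) / η)) * ((B : ℝ) ^ u * (B : ℝ) ^ η) := by ring
    _ = (C₁ ^ h * (1 + (h : ℝ) / η)) * (B : ℝ) ^ (u + η) := by rw [← Real.rpow_add hB0]
    _ ≤ (C₁ ^ h * (1 + (h : ℝ) / η)) * (B : ℝ) ^ ((h : ℝ) - t + 1 + ε) := by
        refine mul_le_mul_of_nonneg_left ?_ (by positivity)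
        exact Real.rpow_le_rpow_of_exponent_le hB1 (by rw [hu]; linarith)
end
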